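/- arXiv:1807.11685 — 2 statements merged into one kernel-verified Lean document; each statement's English description precedes it below -/
import Mathlib

section
/- (Completeness of the Schnorr verification equation) Let G be a commutative group and q a prime number such that every element h of G satisfies h ^ q = 1. Let g : G, let a, x, k : ZMod q, and set the long-term public key A = g ^ (a.val), the commitment X = g ^ (x.val), and the response ρ = x + a * k (computed in ZMod q). Then the verifier's check succeeds: g ^ (ρ.val) = X * A ^ (k.val). -/
section PowVal

variable {M : Type*} [Monoid M] {n : ℕ} {g : M}

theorem pow_zmod_val_add [NeZero n] (hg : g ^ n = 1) (u v : ZMod n) :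
    g ^ (u + v).val = g ^ u.val * g ^ v.val := by
  rw [ZMod.val_add, ← pow_eq_pow_mod _ hg, pow_add]

theorem pow_zmod_val_mul (hg : g ^ n = 1) (u v : ZMod n) :
    g ^ (u * v).val = (g ^ u.val) ^ v.val := by
  rw [ZMod.val_mul, ← pow_eq_pow_mod _ hg, pow_mul]

end PowVal

/-- Completeness of the Schnorr verification equation: with public key
`A = g^a`, commitment `X = g^x`, challenge `k`, and response `ρ = x + a·k`
computed in `ZMod q`, the verifier's check `g^ρ = X · A^k` succeeds. -/
theorem schnorr_verification_complete {G : Type*} [CommGroup G]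
    (q : ℕ) (hq : Nat.Prime q) (hG : ∀ h : G, h ^ q = 1)
    (g : G) (a x k : ZMod q) (A X : G) (ρ : ZMod q)
    (hA : A = g ^ (a.val)) (hX : X = g ^ (x.val)) (hρ : ρ = x + a * k) :
    g ^ (ρ.val) = X * A ^ (k.val) := by
  have : NeZero q := ⟨hq.ne_zero⟩
  rw [hρ, hX, hA, pow_zmod_val_add (hG g), pow_zmod_val_mul (hG g)]
end

section
/- (Completeness of the Pedersen verification equation) Let G be a commutative group and q a prime number such that every element of G satisfies · ^ q = 1. Let g, h : G, let x, y, s₁, s₂, k : ZMod q, and set the public key X = g ^ (x.val) * h ^ (y.val), the commitment C = g ^ (s₁.val) * h ^ (s₂.val), and the responses ρ₁ = s₁ + k * x and ρ₂ = s₂ + k * y (computed in ZMod q). Then the verifier's check succeeds: g ^ (ρ₁.val) * h ^ (ρ₂.val) = C * X ^ (k.val). -/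
/-- Completeness of the Pedersen verification equation: with public key
`X = g^x · h^y`, commitment `C = g^{s₁} · h^{s₂}`, challenge `k`, and responses
`ρ₁ = s₁ + k·x`, `ρ₂ = s₂ + k·y` computed in `ZMod q`, the verifier's check
`g^{ρ₁} · h^{ρ₂} = C · X^k` succeeds. -/
theorem pedersen_verification_complete {G : Type*} [CommGroup G]
    (q : ℕ) (hq : Nat.Prime q) (hG : ∀ u : G, u ^ q = 1)
    (g h : G) (x y s₁ s₂ k : ZMod q) (X C : G) (ρ₁ ρ₂ : ZMod q)
    (hX : X = g ^ (x.val) * h ^ (y.val))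
    (hC : C = g ^ (s₁.val) * h ^ (s₂.val))
    (hρ₁ : ρ₁ = s₁ + k * x) (hρ₂ : ρ₂ = s₂ + k * y) :
    g ^ (ρ₁.val) * h ^ (ρ₂.val) = C * X ^ (k.val) := by
  haveI : NeZero q := ⟨hq.ne_zero⟩
  have key : ∀ (u : G) (n : ℕ), u ^ n = u ^ (n % q) := by
    intro u n
    conv_lhs => rw [← Nat.mod_add_div n q]
    rw [pow_add, pow_mul, hG, one_pow, mul_one]
  have hadd : ∀ (u : G) (a b : ZMod q), u ^ (a + b).val = u ^ a.val * u ^ b.val := by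
    intro u a b
    rw [ZMod.val_add, ← key, pow_add]
  have hmul : ∀ (u : G) (a b : ZMod q), u ^ (a * b).val = (u ^ a.val) ^ b.val := by
    intro u a b
    rw [ZMod.val_mul, ← key, ← pow_mul]
  subst hX hC hρ₁ hρ₂
  rw [hadd, hadd, mul_comm k x, mul_comm k y, hmul, hmul, mul_pow]
  exact mul_mul_mul_comm _ _ _ _
end
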